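/- For an element f ∈ R and an index i ∈ {1,…,s}, the following conditions are equivalent: (a) f is a separator for m_i; (b) Ann_R(f) = m_i; (c) f is a non-zero element of the ideal (q_i :_R m_i) · ∏_{j≠i} q_j; (d) the image of f in R/q_i is a non-zero element of the socle Ann_{R/q_i}(m_i/q_i), and the image of f in R/q_j is zero for every j ≠ i. -/

import Mathlib

open MvPolynomial

set_option synthInstance.maxHeartbeats 1000000
set_option maxHeartbeats 1000000

namespace CB

variable (K : Type*) [Field K] {n : ℕ}

/-- The degree filtration `F_iR` on `R = P/I`: the image in `R` of the polynomials
of total degree at most `i` (together with `0`), and `{0}` for `i < 0`. -/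
noncomputable def degFil (I : Ideal (MvPolynomial (Fin n) K)) (i : ℤ) :
    Submodule K (MvPolynomial (Fin n) K ⧸ I) :=
  if 0 ≤ i then
    Submodule.map (Ideal.Quotient.mkₐ K I).toLinearMap
      (restrictTotalDegree (Fin n) K i.toNat)
  else ⊥

/-- The affine Hilbert function `HF^a_R(i) = dim_K F_iR`. -/
noncomputable def aHF (I : Ideal (MvPolynomial (Fin n) K)) (i : ℤ) : ℕ :=
  Module.finrank K (degFil K I i)

/-- The regularity index `ri(R)`: the smallest `i` with `HF^a_R(i) = dim_K R`. -/
noncomputable def ri (I : Ideal (MvPolynomial (Fin n) K)) : ℤ :=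
  sInf {i : ℤ | aHF K I i = Module.finrank K (MvPolynomial (Fin n) K ⧸ I)}

/-- The order `ord_F(f)` of an element of `R`. -/
noncomputable def ordF (I : Ideal (MvPolynomial (Fin n) K))
    (f : MvPolynomial (Fin n) K ⧸ I) : ℤ :=
  sInf {i : ℤ | f ∈ degFil K I i}

/-- The action of `R` on the canonical module `ω_R = Hom_K(R,K)`:
`(f · φ)(g) = φ(f * g)`. -/
noncomputable def dAct (I : Ideal (MvPolynomial (Fin n) K))
    (f : MvPolynomial (Fin n) K ⧸ I)
    (φ : Module.Dual K (MvPolynomial (Fin n) K ⧸ I)) :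
    Module.Dual K (MvPolynomial (Fin n) K ⧸ I) :=
  φ.comp (LinearMap.mulLeft K f)

/-- The degree filtration `G_iω_R = {φ : φ(F_{-i-1}R) = 0}` on the canonical module. -/
noncomputable def Gfil (I : Ideal (MvPolynomial (Fin n) K)) (i : ℤ) :
    Submodule K (Module.Dual K (MvPolynomial (Fin n) K ⧸ I)) :=
  Submodule.dualAnnihilator (degFil K I (-i - 1))

/-- The order `ord_G(φ)` of an element of `ω_R`. -/
noncomputable def ordG (I : Ideal (MvPolynomial (Fin n) K))
    (φ : Module.Dual K (MvPolynomial (Fin n) K ⧸ I)) : ℤ :=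
  sInf {i : ℤ | φ ∈ Gfil K I i}

/-- `Q : Fin s → Ideal P` is the (minimal) primary decomposition of `I`. -/
def IsPrimaryDecomp (I : Ideal (MvPolynomial (Fin n) K)) {s : ℕ}
    (Q : Fin s → Ideal (MvPolynomial (Fin n) K)) : Prop :=
  (∀ i, (Q i).IsPrimary) ∧ I = ⨅ i, Q i ∧
    Function.Injective fun i => (Q i).radical

/-- The image `q_j` of the primary component `Q_j` in `R`. -/
noncomputable def qR (I : Ideal (MvPolynomial (Fin n) K)) {s : ℕ}
    (Q : Fin s → Ideal (MvPolynomial (Fin n) K)) (j : Fin s) :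
    Ideal (MvPolynomial (Fin n) K ⧸ I) :=
  (Q j).map (Ideal.Quotient.mk I)

/-- The image `m_j` of the maximal component `M_j = Rad(Q_j)` in `R`. -/
noncomputable def mR (I : Ideal (MvPolynomial (Fin n) K)) {s : ℕ}
    (Q : Fin s → Ideal (MvPolynomial (Fin n) K)) (j : Fin s) :
    Ideal (MvPolynomial (Fin n) K ⧸ I) :=
  ((Q j).radical).map (Ideal.Quotient.mk I)

/-- `ℓ_i = dim_K (P / M_i)`. -/
noncomputable def ell {s : ℕ} (Q : Fin s → Ideal (MvPolynomial (Fin n) K)) (i : Fin s) : ℕ :=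
  Module.finrank K (MvPolynomial (Fin n) K ⧸ (Q i).radical)

/-- `f ∈ R` is a separator for `m_i`: `dim_K⟨f⟩ = dim_K(R/m_i)` and `f ∈ q_j` for `j ≠ i`. -/
def IsSeparator (I : Ideal (MvPolynomial (Fin n) K)) {s : ℕ}
    (Q : Fin s → Ideal (MvPolynomial (Fin n) K)) (i : Fin s)
    (f : MvPolynomial (Fin n) K ⧸ I) : Prop :=
  Module.finrank K ((Ideal.span {f}).restrictScalars K)
      = Module.finrank K ((MvPolynomial (Fin n) K ⧸ I) ⧸ mR K I Q i) ∧
    ∀ j, j ≠ i → f ∈ qR K I Q j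

/-- `J` is a `Q_i`-divisor of `I`. -/
def IsQiDivisor (I : Ideal (MvPolynomial (Fin n) K)) {s : ℕ}
    (Q : Fin s → Ideal (MvPolynomial (Fin n) K)) (i : Fin s)
    (J : Ideal (MvPolynomial (Fin n) K)) : Prop :=
  ∃ Q' : Ideal (MvPolynomial (Fin n) K),
    Q i < Q' ∧ Q' ≤ (Q i).radical ∧ J = ⨅ j, if j = i then Q' else Q j

/-- The image `J̄` of an ideal `J ⊇ I` in `R`, as a `K`-vector subspace; its dimension
is `dim_K (J/I)`. -/
noncomputable def resIm (I J : Ideal (MvPolynomial (Fin n) K)) :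
    Submodule K (MvPolynomial (Fin n) K ⧸ I) :=
  (J.map (Ideal.Quotient.mk I)).restrictScalars K

/-- `J` is a minimal `Q_i`-divisor of `I`: a `Q_i`-divisor with `dim_K(J/I) = ℓ_i`. -/
def IsMinQiDivisor (I : Ideal (MvPolynomial (Fin n) K)) {s : ℕ}
    (Q : Fin s → Ideal (MvPolynomial (Fin n) K)) (i : Fin s)
    (J : Ideal (MvPolynomial (Fin n) K)) : Prop :=
  IsQiDivisor K I Q i J ∧ Module.finrank K (resIm K I J) = ell K Q i

/-- `ri(J̄) = max { ord_F(f) : f ∈ J̄ \ {0} }`. -/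
noncomputable def riBar (I J : Ideal (MvPolynomial (Fin n) K)) : ℤ :=
  sSup {d : ℤ | ∃ f ∈ resIm K I J, f ≠ 0 ∧ ordF K I f = d}

/-- The separator degree `sepdeg(m_i) = min { ri(J̄) : J a minimal Q_i-divisor of I }`. -/
noncomputable def sepdeg (I : Ideal (MvPolynomial (Fin n) K)) {s : ℕ}
    (Q : Fin s → Ideal (MvPolynomial (Fin n) K)) (i : Fin s) : ℤ :=
  sInf {d : ℤ | ∃ J, IsMinQiDivisor K I Q i J ∧ riBar K I J = d}

/-- `R = P/I` has the Cayley–Bacharach property: `sepdeg(m_i) = ri(R)` for all maximal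
ideals `m_i`, where the `m_i` come from the primary decomposition of `I`. -/
def hasCBP (I : Ideal (MvPolynomial (Fin n) K)) : Prop :=
  ∀ (s : ℕ) (Q : Fin s → Ideal (MvPolynomial (Fin n) K)),
    IsPrimaryDecomp K I Q → ∀ i, sepdeg K I Q i = ri K I

/-- The socle of a ring `A` with respect to an ideal `m`: `Ann_A(m)`. -/
noncomputable def socle (A : Type*) [CommRing A] (m : Ideal A) : Ideal A :=
  Submodule.colon (⊥ : Ideal A) (m : Set A)

theorem socle_isTorsionBySet (A : Type*) [CommRing A] (m : Ideal A) :
    Module.IsTorsionBySet A (socle A m) m := by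
  intro x a
  have h : (x : A) • (a : A) ∈ (⊥ : Ideal A) :=
    Submodule.mem_colon.mp x.2 (a : A) a.2
  apply Subtype.ext
  have : (a : A) * (x : A) = 0 := by
    simpa [smul_eq_mul, mul_comm] using h
  simpa [smul_eq_mul] using this

/-- The socle, viewed as a vector space over the residue field `A/m`. -/
noncomputable def socleModule (A : Type*) [CommRing A] (m : Ideal A) :
    Module (A ⧸ m) (socle A m) :=
  (socle_isTorsionBySet A m).module

/-- The socle of `A` at `m` is one-dimensional over the residue field `A/m`. -/
def SocleOneDim (A : Type*) [CommRing A] (m : Ideal A) : Prop :=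
  @Module.finrank (A ⧸ m) (socle A m) _ _ (socleModule A m) = 1

/-- `R = P/I` is locally Gorenstein: every local factor `R/q_i` is a Gorenstein local
ring, i.e. its socle is one-dimensional over the residue field. -/
def IsLocallyGorenstein (I : Ideal (MvPolynomial (Fin n) K)) : Prop :=
  ∀ (s : ℕ) (Q : Fin s → Ideal (MvPolynomial (Fin n) K)), IsPrimaryDecomp K I Q →
    ∀ i, SocleOneDim ((MvPolynomial (Fin n) K ⧸ I) ⧸ qR K I Q i)
      ((mR K I Q i).map (Ideal.Quotient.mk (qR K I Q i)))

/-- The degree form ideal `DF(I)`, generated by the degree forms (top degree homogeneous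
components) of the nonzero elements of `I`; one has `gr_F(R) ≅ P/DF(I)`. -/
noncomputable def DF (I : Ideal (MvPolynomial (Fin n) K)) :
    Ideal (MvPolynomial (Fin n) K) :=
  Ideal.span {g | ∃ f ∈ I, f ≠ (0 : MvPolynomial (Fin n) K) ∧
    g = homogeneousComponent f.totalDegree f}

/-- The maximal ideal of the graded local ring `gr_F(R) ≅ P/DF(I)`: the image of the
irrelevant ideal `⟨x_1,…,x_n⟩`. -/
noncomputable def grMaxIdeal (I : Ideal (MvPolynomial (Fin n) K)) :
    Ideal (MvPolynomial (Fin n) K ⧸ DF K I) :=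
  (Ideal.span (Set.range (X : Fin n → MvPolynomial (Fin n) K))).map
    (Ideal.Quotient.mk (DF K I))

/-- `R` is a strict Gorenstein ring: the socle of `gr_F(R) ≅ P/DF(I)` is one-dimensional
over `K`. -/
def IsStrictGorenstein (I : Ideal (MvPolynomial (Fin n) K)) : Prop :=
  Module.finrank K
    ((socle (MvPolynomial (Fin n) K ⧸ DF K I) (grMaxIdeal K I)).restrictScalars K) = 1

/-- The extension ideal `I·L[x_1,…,x_n]`, so that `R ⊗_K L = L[x_1,…,x_n]/I·L[x_1,…,x_n]`. -/
noncomputable def extIdeal (L : Type*) [Field L] [Algebra K L]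
    (I : Ideal (MvPolynomial (Fin n) K)) : Ideal (MvPolynomial (Fin n) L) :=
  I.map (MvPolynomial.map (algebraMap K L))

/-- The affine Hilbert function of `R` is symmetric:
`ΔHF^a_R(ri(R)−i) = ΔHF^a_R(i)` for all `i ∈ ℤ`. -/
def SymmetricHF (I : Ideal (MvPolynomial (Fin n) K)) : Prop :=
  ∀ i : ℤ, (aHF K I (ri K I - i) : ℤ) - aHF K I (ri K I - i - 1)
    = (aHF K I i : ℤ) - aHF K I (i - 1)

/-- `Ann_R(φ) = {0}` for `φ ∈ ω_R`. -/
def AnnZero (I : Ideal (MvPolynomial (Fin n) K))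
    (φ : Module.Dual K (MvPolynomial (Fin n) K ⧸ I)) : Prop :=
  ∀ f : MvPolynomial (Fin n) K ⧸ I, dAct K I f φ = 0 → f = 0

/-- `φ` generates `ω_R` as an `R`-module: `ω_R = ⟨φ⟩`. -/
def GeneratesDual (I : Ideal (MvPolynomial (Fin n) K))
    (φ : Module.Dual K (MvPolynomial (Fin n) K ⧸ I)) : Prop :=
  ∀ ψ : Module.Dual K (MvPolynomial (Fin n) K ⧸ I),
    ∃ f : MvPolynomial (Fin n) K ⧸ I, ψ = dAct K I f φ

/-- The `i`-th socle space `S_i ⊆ R`: the preimage under the decomposition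
`R ≅ R/q_1 × … × R/q_s` of `{0} × … × Soc(R/q_i) × … × {0}`. -/
noncomputable def socSpace (I : Ideal (MvPolynomial (Fin n) K)) {s : ℕ}
    (Q : Fin s → Ideal (MvPolynomial (Fin n) K)) (i : Fin s) :
    Ideal (MvPolynomial (Fin n) K ⧸ I) :=
  ((socle ((MvPolynomial (Fin n) K ⧸ I) ⧸ qR K I Q i)
        ((mR K I Q i).map (Ideal.Quotient.mk (qR K I Q i)))).comap
      (Ideal.Quotient.mk (qR K I Q i))) ⊓
    ⨅ j ≠ i, qR K I Q j

end CB

/-!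
Write `m_i = rad q_i`. All four conditions say that `f ∉ q_i`, `f m_i ⊆ q_i` and `f ∈ q_j` for
`j ≠ i`. For the annihilator: since `q_i` is primary, `Ann f ⊆ m_i` as soon as `f ∉ q_i`, and an
element of `m_i ∖ m_j` kills `f`, so it forces `f ∈ q_j`. For the product: the ideals `q_j` are
pairwise comaximal, so `(q_i : m_i) · ∏_{j ≠ i} q_j = (q_i : m_i) ∩ ⋂_{j ≠ i} q_j`. For the
dimension: `⟨f⟩ ≅ R / Ann f`, and `R / Ann f ↠ R / m_i` is an isomorphism exactly when the two
dimensions agree.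
-/

namespace Ideal

variable {R : Type*} [CommRing R]

theorem IsPrimary.map_of_surjective {S : Type*} [CommRing S] {φ : R →+* S}
    (hφ : Function.Surjective φ) {q : Ideal R} (hq : q.IsPrimary) (hker : RingHom.ker φ ≤ q) :
    (q.map φ).IsPrimary := by
  have hcomap : (q.map φ).comap φ = q := by
    rw [comap_map_of_surjective φ hφ, ← RingHom.ker_eq_comap_bot, sup_eq_left.mpr hker]
  rw [isPrimary_iff] at hq ⊢
  refine ⟨fun htop => hq.1 (by rw [← hcomap, htop, comap_top]), fun {x y} hxy => ?_⟩
  obtain ⟨a, rfl⟩ := hφ x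
  obtain ⟨b, rfl⟩ := hφ y
  rw [← map_mul, ← mem_comap, hcomap] at hxy
  rw [← map_radical_of_surjective hφ hker]
  exact (hq.2 hxy).imp (mem_map_of_mem φ) (mem_map_of_mem φ)

theorem IsPrimary.mem_of_mul_mem_of_notMem_radical {q : Ideal R} (hq : q.IsPrimary) {f g : R}
    (hgf : g * f ∈ q) (hg : g ∉ q.radical) : f ∈ q :=
  ((isPrimary_iff.mp hq).2 (mul_comm g f ▸ hgf)).resolve_right hg

theorem IsPrimary.colon_bot_span_singleton_le_radical {q : Ideal R} (hq : q.IsPrimary) {f : R}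
    (hf : f ∉ q) : (⊥ : Ideal R).colon (span {f}) ≤ q.radical := fun g hg => by
  rw [mem_colon_span_singleton, mem_bot] at hg
  by_contra hg'
  exact hf (hq.mem_of_mul_mem_of_notMem_radical (by rw [hg]; exact q.zero_mem) hg')

variable (K : Type*) [Field K] [Algebra K R]

theorem finrank_span_singleton_eq_finrank_quotient (f : R) :
    Module.finrank K ((span {f}).restrictScalars K) =
      Module.finrank K (R ⧸ (⊥ : Ideal R).colon (span {f})) := by
  have htorsion : torsionOf R R f = (⊥ : Ideal R).colon (span {f}) := by
    ext g
    rw [mem_torsionOf_iff, mem_colon_span_singleton, mem_bot, smul_eq_mul]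
  exact (((Submodule.restrictScalarsEquiv K R R (span {f})).trans
    ((quotTorsionOfEquivSpanSingleton R R f).symm.trans
      (Submodule.quotEquivOfEq _ _ htorsion))).restrictScalars K).finrank_eq

variable {K} in
theorem eq_of_le_of_finrank_quotient_eq [FiniteDimensional K R] {I J : Ideal R} (hle : I ≤ J)
    (h : Module.finrank K (R ⧸ I) = Module.finrank K (R ⧸ J)) : I = J := by
  have hfinrank (N : Ideal R) :
      Module.finrank K (R ⧸ N) + Module.finrank K (N.restrictScalars K) = Module.finrank K R := by
    rw [← (Submodule.Quotient.restrictScalarsEquiv K N).finrank_eq]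
    exact Submodule.finrank_quotient_add_finrank _
  refine Submodule.restrictScalars_injective K R R
    (Submodule.eq_of_le_of_finrank_eq (Submodule.restrictScalars_mono K hle) ?_)
  have := hfinrank I
  have := hfinrank J
  omega

end Ideal

structure IsMaximalPrimaryDecomp {A ι : Type*} [CommRing A] (q : ι → Ideal A) : Prop where
  isPrimary : ∀ j, (q j).IsPrimary
  isMaximal_radical : ∀ j, (q j).radical.IsMaximal
  radical_injective : Function.Injective fun j => (q j).radical
  iInf_eq_bot : ⨅ j, q j = ⊥

namespace IsMaximalPrimaryDecomp

variable {A ι : Type*} [CommRing A] {q : ι → Ideal A}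

theorem eq_zero_of_forall_mem (hq : IsMaximalPrimaryDecomp q) {f : A} (hf : ∀ j, f ∈ q j) :
    f = 0 := by
  simpa [hq.iInf_eq_bot] using Ideal.mem_iInf.mpr hf

theorem notMem_iff_ne_zero (hq : IsMaximalPrimaryDecomp q) {i : ι} {f : A}
    (hf : ∀ j, j ≠ i → f ∈ q j) : f ∉ q i ↔ f ≠ 0 := by
  refine ⟨fun hfi hf0 => hfi (hf0 ▸ (q i).zero_mem), fun hf0 hfi => hf0 ?_⟩
  refine hq.eq_zero_of_forall_mem fun j => ?_
  obtain rfl | hji := eq_or_ne j i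
  exacts [hfi, hf j hji]

theorem isCoprime (hq : IsMaximalPrimaryDecomp q) {j k : ι} (hjk : j ≠ k) :
    IsCoprime (q j) (q k) := by
  have := hq.isMaximal_radical j
  have := hq.isMaximal_radical k
  rw [Ideal.isCoprime_iff_sup_eq, ← Ideal.radical_eq_top, Ideal.radical_sup,
    (Ideal.isCoprime_of_isMaximal (hq.radical_injective.ne hjk)).sup_eq, Ideal.radical_top]

theorem mem_of_colon_bot_eq_radical (hq : IsMaximalPrimaryDecomp q) {i j : ι} {f : A}
    (hf : (⊥ : Ideal A).colon (Ideal.span {f}) = (q i).radical) (hji : j ≠ i) : f ∈ q j := by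
  obtain ⟨g, hgi, hgj⟩ : ∃ g ∈ (q i).radical, g ∉ (q j).radical := by
    refine SetLike.not_le_iff_exists.mp fun hle => hji (hq.radical_injective ?_)
    exact ((hq.isMaximal_radical i).eq_of_le (hq.isMaximal_radical j).ne_top hle).symm
  rw [← hf, Ideal.mem_colon_span_singleton, Ideal.mem_bot] at hgi
  exact (hq.isPrimary j).mem_of_mul_mem_of_notMem_radical (by rw [hgi]; exact (q j).zero_mem) hgj

theorem colon_bot_eq_radical_iff (hq : IsMaximalPrimaryDecomp q) (i : ι) (f : A) :
    (⊥ : Ideal A).colon (Ideal.span {f}) = (q i).radical ↔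
      f ∉ q i ∧ f ∈ (q i).colon (q i).radical ∧ ∀ j, j ≠ i → f ∈ q j := by
  constructor
  · intro hf
    have hfq : ∀ j, j ≠ i → f ∈ q j := fun j hji => hq.mem_of_colon_bot_eq_radical hf hji
    refine ⟨(hq.notMem_iff_ne_zero hfq).mpr ?_, Submodule.mem_colon.mpr fun g hg => ?_, hfq⟩
    · rintro rfl
      exact (hq.isMaximal_radical i).ne_top (by rw [← hf]; simp)
    · rw [SetLike.mem_coe, ← hf, Ideal.mem_colon_span_singleton, Ideal.mem_bot] at hg
      rw [smul_eq_mul, mul_comm, hg]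
      exact (q i).zero_mem
  · rintro ⟨hfi, hcolon, hfq⟩
    refine le_antisymm ((hq.isPrimary i).colon_bot_span_singleton_le_radical hfi) fun g hg => ?_
    rw [Ideal.mem_colon_span_singleton, Ideal.mem_bot]
    refine hq.eq_zero_of_forall_mem fun j => ?_
    obtain rfl | hji := eq_or_ne j i
    · rw [mul_comm]
      exact Submodule.mem_colon.mp hcolon g hg
    · exact Ideal.mul_mem_left _ g (hfq j hji)

theorem ne_zero_and_mem_colon_mul_prod_iff [Fintype ι] [DecidableEq ι]
    (hq : IsMaximalPrimaryDecomp q) (i : ι) (f : A) :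
    f ≠ 0 ∧ f ∈ (q i).colon (q i).radical * ∏ j ∈ Finset.univ.erase i, q j ↔
      f ∉ q i ∧ f ∈ (q i).colon (q i).radical ∧ ∀ j, j ≠ i → f ∈ q j := by
  have hprod : (q i).colon (q i).radical * ∏ j ∈ Finset.univ.erase i, q j =
      (q i).colon (q i).radical ⊓ ⨅ j ∈ Finset.univ.erase i, q j := by
    rw [Ideal.prod_eq_iInf_of_pairwise_isCoprime fun j _ k _ hjk => hq.isCoprime hjk]
    refine Ideal.mul_eq_inf_of_isCoprime (Ideal.isCoprime_biInf fun j hj => ?_)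
    rw [Ideal.isCoprime_iff_sup_eq, eq_top_iff,
      ← (hq.isCoprime (Finset.ne_of_mem_erase hj).symm).sup_eq]
    exact sup_le_sup_right Ideal.le_colon _
  simp only [hprod, Submodule.mem_inf, Submodule.mem_iInf, Finset.mem_erase, Finset.mem_univ,
    and_true]
  constructor
  · rintro ⟨hf0, hcolon, hfq⟩
    exact ⟨(hq.notMem_iff_ne_zero hfq).mpr hf0, hcolon, hfq⟩
  · rintro ⟨hfi, hcolon, hfq⟩
    exact ⟨(hq.notMem_iff_ne_zero hfq).mp hfi, hcolon, hfq⟩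

theorem finrank_span_eq_and_forall_mem_iff {K : Type*} [Field K] [Algebra K A]
    [FiniteDimensional K A] (hq : IsMaximalPrimaryDecomp q) (i : ι) (f : A) :
    Module.finrank K ((Ideal.span {f}).restrictScalars K) =
        Module.finrank K (A ⧸ (q i).radical) ∧ (∀ j, j ≠ i → f ∈ q j) ↔
      (⊥ : Ideal A).colon (Ideal.span {f}) = (q i).radical := by
  refine ⟨fun ⟨hdim, hfq⟩ => ?_, fun hf =>
    ⟨by rw [Ideal.finrank_span_singleton_eq_finrank_quotient, hf],
      fun j hji => hq.mem_of_colon_bot_eq_radical hf hji⟩⟩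
  have hf0 : f ≠ 0 := by
    rintro rfl
    have := hq.isMaximal_radical i
    have : 0 < Module.finrank K (A ⧸ (q i).radical) := Module.finrank_pos
    rw [Ideal.span_singleton_eq_bot.mpr rfl, Submodule.restrictScalars_bot, finrank_bot] at hdim
    omega
  rw [Ideal.finrank_span_singleton_eq_finrank_quotient] at hdim
  have hfi : f ∉ q i := (hq.notMem_iff_ne_zero hfq).mpr hf0
  exact Ideal.eq_of_le_of_finrank_quotient_eq
    ((hq.isPrimary i).colon_bot_span_singleton_le_radical hfi) hdim

end IsMaximalPrimaryDecomp

universe u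

namespace CB

variable {K : Type u} [Field K] {n : ℕ}

theorem mk_mem_socle_map_iff {A : Type*} [CommRing A] (q m : Ideal A) (f : A) :
    Ideal.Quotient.mk q f ∈ socle (A ⧸ q) (m.map (Ideal.Quotient.mk q)) ↔ f ∈ q.colon m := by
  simp only [socle, Submodule.mem_colon, SetLike.mem_coe, Submodule.mem_bot, smul_eq_mul,
    Ideal.mem_map_iff_of_surjective _ Ideal.Quotient.mk_surjective]
  constructor
  · intro h g hg
    rw [← Ideal.Quotient.eq_zero_iff_mem, map_mul]
    exact h _ ⟨g, hg, rfl⟩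
  · rintro h _ ⟨g, hg, rfl⟩
    rw [← map_mul, Ideal.Quotient.eq_zero_iff_mem]
    exact h g hg

variable {s : ℕ} {I : Ideal (MvPolynomial (Fin n) K)}
  {Q : Fin s → Ideal (MvPolynomial (Fin n) K)}

theorem IsPrimaryDecomp.le (hQ : IsPrimaryDecomp K I Q) (j : Fin s) : I ≤ Q j :=
  hQ.2.1.trans_le (iInf_le Q j)

theorem IsPrimaryDecomp.radical_qR (hQ : IsPrimaryDecomp K I Q) (j : Fin s) :
    (qR K I Q j).radical = mR K I Q j :=
  (Ideal.map_radical_of_surjective Ideal.Quotient.mk_surjective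
    (Ideal.mk_ker.trans_le (hQ.le j))).symm

theorem IsPrimaryDecomp.isMaximalPrimaryDecomp
    [FiniteDimensional K (MvPolynomial (Fin n) K ⧸ I)] (hQ : IsPrimaryDecomp K I Q) :
    IsMaximalPrimaryDecomp (qR K I Q) := by
  have isPrimary j : (qR K I Q j).IsPrimary :=
    (hQ.1 j).map_of_surjective Ideal.Quotient.mk_surjective (Ideal.mk_ker.trans_le (hQ.le j))
  have : IsArtinianRing (MvPolynomial (Fin n) K ⧸ I) := IsArtinianRing.of_finite K _
  refine ⟨isPrimary, fun j => ?_, fun j k hjk => hQ.2.2 ?_, ?_⟩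
  · have := Ideal.isPrime_radical (isPrimary j)
    exact IsArtinianRing.isMaximal_of_isPrime _
  · have h := congrArg (Ideal.comap (Ideal.Quotient.mk I)) hjk
    simp only [hQ.radical_qR, mR] at h
    rwa [Ideal.comap_map_mk ((hQ.le j).trans Ideal.le_radical),
      Ideal.comap_map_mk ((hQ.le k).trans Ideal.le_radical)] at h
  · refine Ideal.comap_injective_of_surjective _ Ideal.Quotient.mk_surjective ?_
    rw [Ideal.comap_iInf, ← RingHom.ker_eq_comap_bot, Ideal.mk_ker]
    exact (iInf_congr fun j => Ideal.comap_map_mk (hQ.le j)).trans hQ.2.1.symm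

theorem stmt_1 {s : ℕ} (I : Ideal (MvPolynomial (Fin n) K))
    [FiniteDimensional K (MvPolynomial (Fin n) K ⧸ I)]
    (Q : Fin s → Ideal (MvPolynomial (Fin n) K)) (hQ : IsPrimaryDecomp K I Q)
    (i : Fin s) (f : MvPolynomial (Fin n) K ⧸ I) :
    List.TFAE [
      IsSeparator K I Q i f,
      Submodule.colon (⊥ : Ideal (MvPolynomial (Fin n) K ⧸ I)) (Ideal.span {f})
        = mR K I Q i,
      f ≠ 0 ∧ f ∈ Submodule.colon (qR K I Q i) (mR K I Q i) *
        ∏ j ∈ Finset.univ.erase i, qR K I Q j,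
      (Ideal.Quotient.mk (qR K I Q i) f ≠ 0 ∧
          Ideal.Quotient.mk (qR K I Q i) f ∈
            socle ((MvPolynomial (Fin n) K ⧸ I) ⧸ qR K I Q i)
              ((mR K I Q i).map (Ideal.Quotient.mk (qR K I Q i)))) ∧
        ∀ j, j ≠ i → Ideal.Quotient.mk (qR K I Q j) f = 0] := by
  have hq := hQ.isMaximalPrimaryDecomp
  unfold IsSeparator
  rw [← hQ.radical_qR i]
  tfae_have 1 ↔ 2 := hq.finrank_span_eq_and_forall_mem_iff i f
  tfae_have 2 ↔ 3 :=
    (hq.colon_bot_eq_radical_iff i f).trans (hq.ne_zero_and_mem_colon_mul_prod_iff i f).symm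
  tfae_have 4 ↔ 2 := by
    simp only [ne_eq, Ideal.Quotient.eq_zero_iff_mem, mk_mem_socle_map_iff, and_assoc]
    exact (hq.colon_bot_eq_radical_iff i f).symm
  tfae_finish

end CB
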